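/- For every k with 1 ≤ k ≤ n, one has the factorization f_k = f_{k-1}^p - (C h_k) · f_{k-1} in Polynomial S, where h_k = (f_{k-1}.eval y_k)^{p-1} and C h_k denotes the constant polynomial h_k. -/

import Mathlib

open MvPolynomial

/-- `V p n k` : the set of `𝔽_p`-linear combinations of the first `k` variables. -/
noncomputable def V (p n k : ℕ) [Fact p.Prime] : Finset (MvPolynomial (Fin n) (ZMod p)) :=
  (Finset.univ : Finset (Fin n → ZMod p)).image
    (fun c => ∑ j ∈ Finset.univ.filter (fun j : Fin n => j.val < k), C (c j) * X j)

/-- `f p n k = ∏_{u ∈ V_k} (X - C u)`. -/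
noncomputable def f (p n k : ℕ) [Fact p.Prime] :
    Polynomial (MvPolynomial (Fin n) (ZMod p)) :=
  ∏ u ∈ V p n k, (Polynomial.X - Polynomial.C u)

/-- Dickson invariant `d_{k,i}`. -/
noncomputable def d (p n k i : ℕ) [Fact p.Prime] : MvPolynomial (Fin n) (ZMod p) :=
  (-1) ^ (k - i) * (f p n k).coeff (p ^ i)

/-- Borel generator: `hGen p n j` is `h_{j+1}` of the paper. -/
noncomputable def hGen (p n : ℕ) [Fact p.Prime] (j : Fin n) : MvPolynomial (Fin n) (ZMod p) :=
  (Polynomial.eval (X j) (f p n j.val)) ^ (p - 1)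

/-- Action of `GL_n(𝔽_p)` on `S` by linear substitution `g · y_j = ∑_i g_{ij} y_i`. -/
noncomputable def gact (p n : ℕ) [Fact p.Prime] (g : GL (Fin n) (ZMod p)) :
    MvPolynomial (Fin n) (ZMod p) →ₐ[ZMod p] MvPolynomial (Fin n) (ZMod p) :=
  aeval (fun j : Fin n => ∑ i : Fin n, C ((g : Matrix (Fin n) (Fin n) (ZMod p)) i j) * X i)

/-!
The set `V_k` is the disjoint union of the translates `V_{k-1} + a y_k`, `a ∈ 𝔽_p`, so
`f_k = ∏_a f_{k-1}(X - a y_k)`. If `f_{k-1}` is an additive polynomial, the factors are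
`f_{k-1} - a f_{k-1}(y_k)`, and `∏_{a ∈ 𝔽_p} (T - a c) = T^p - c^{p-1} T` (compare roots) gives the
factorization. Since Frobenius is additive in characteristic `p`, the factorization in turn makes
`f_k` additive; starting from `f_0 = X`, induction on `k` proves both together.
-/

namespace Polynomial

open scoped Polynomial

variable {R : Type*} [CommRing R]

/-- Additivity as an identity of polynomials: over a finite ring this is stronger than
additivity of `x ↦ P.eval x`. -/
def IsAdditive (P : R[X]) : Prop :=
  ∀ s : R, P.comp (X + C s) = P + C (P.eval s)

theorem isAdditive_X : (X : R[X]).IsAdditive := fun s => by simp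

namespace IsAdditive

variable {P : R[X]} (hP : P.IsAdditive)
include hP

theorem eval_add (x y : R) : P.eval (x + y) = P.eval x + P.eval y := by
  simpa [add_comm x] using congrArg (eval x) (hP y)

def evalAddMonoidHom : R →+ R := AddMonoidHom.mk' P.eval hP.eval_add

theorem comp_X_sub_C (s : R) : P.comp (X - C s) = P - C (P.eval s) := by
  rw [sub_eq_add_neg, ← C_neg, hP, show P.eval (-s) = -P.eval s from
    map_neg hP.evalAddMonoidHom s, C_neg, sub_eq_add_neg]

theorem eval_smul {p : ℕ} [Algebra (ZMod p) R] (a : ZMod p) (x : R) :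
    P.eval (a • x) = a • P.eval x :=
  ZMod.map_smul hP.evalAddMonoidHom a x

theorem pow_char_sub_C_mul (p : ℕ) [Fact p.Prime] [CharP R p] (c : R) :
    (P ^ p - C c * P).IsAdditive := fun s => by
  simp only [sub_comp, pow_comp, mul_comp, C_comp, hP s, eval_sub, eval_pow, eval_mul, eval_C,
    add_pow_char, C_sub, C_mul, C_pow]
  ring

end IsAdditive

theorem prod_X_sub_C_smul {p : ℕ} [Fact p.Prime] [IsDomain R] [Algebra (ZMod p) R] {c : R}
    (hc : c ≠ 0) :
    ∏ a : ZMod p, (X - C (a • c)) = X ^ p - C (c ^ (p - 1)) * X := by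
  have hp := (Fact.out : p.Prime).one_lt
  have hinj : Function.Injective fun a : ZMod p => a • c := fun a b h => by
    simpa [Algebra.smul_def, mul_left_inj' hc] using h
  have hlow : (C (c ^ (p - 1)) * X : R[X]).degree < p :=
    (degree_C_mul_X_le _).trans_lt (by exact_mod_cast hp)
  have hmonic : (∏ a : ZMod p, (X - C (a • c))).Monic :=
    monic_prod_of_monic _ _ fun a _ => monic_X_sub_C _
  have hdeg : (∏ a : ZMod p, (X - C (a • c))).degree = (p : WithBot ℕ) := by
    rw [degree_eq_natDegree hmonic.ne_zero, natDegree_prod_of_monic _ _ fun a _ => monic_X_sub_C _]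
    simp
  have hdeg' : (X ^ p - C (c ^ (p - 1)) * X : R[X]).degree = (p : WithBot ℕ) := by
    rw [degree_sub_eq_left_of_degree_lt (by rwa [degree_X_pow]), degree_X_pow]
  refine eq_of_degree_sub_lt_of_eval_index_eq Finset.univ hinj.injOn ?_ fun a _ => ?_
  · rw [Finset.card_univ, ZMod.card, ← hdeg]
    exact degree_sub_lt_left (hdeg.trans hdeg'.symm) hmonic.ne_zero
      (by rw [hmonic.leadingCoeff, (monic_X_pow_sub hlow).leadingCoeff])
  · rw [eval_prod, Finset.prod_eq_zero (Finset.mem_univ a) (by simp)]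
    simp only [eval_sub, eval_pow, eval_X, eval_mul, eval_C, Algebra.smul_def]
    rw [mul_pow, ← map_pow, ZMod.pow_card, ← pow_sub_one_mul (by omega : p ≠ 0) c]
    ring

theorem prod_sub_smul {p : ℕ} [Fact p.Prime] [IsDomain R] [Algebra (ZMod p) R] (t c : R) :
    ∏ a : ZMod p, (t - a • c) = t ^ p - c ^ (p - 1) * t := by
  rcases eq_or_ne c 0 with rfl | hc
  · simp [zero_pow (Nat.sub_ne_zero_of_lt (Fact.out : p.Prime).one_lt)]
  · simpa [eval_prod] using congrArg (eval t) (prod_X_sub_C_smul (p := p) hc)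

theorem IsAdditive.prod_comp_X_sub_C_smul {P : R[X]} (hP : P.IsAdditive) {p : ℕ} [Fact p.Prime]
    [IsDomain R] [Algebra (ZMod p) R] (y : R) :
    ∏ a : ZMod p, P.comp (X - C (a • y)) = P ^ p - C (P.eval y ^ (p - 1)) * P := by
  simp_rw [hP.comp_X_sub_C, hP.eval_smul, ← smul_C, prod_sub_smul, C_pow]

end Polynomial

variable {p n : ℕ} [Fact p.Prime]

theorem V_zero : V p n 0 = {0} := by
  simp [V, Finset.image_const Finset.univ_nonempty]

theorem f_zero : f p n 0 = Polynomial.X := by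
  simp [f, V_zero]

theorem coeff_single_eq_zero_of_mem_V {m : ℕ} {u : MvPolynomial (Fin n) (ZMod p)}
    (hu : u ∈ V p n m) {j : Fin n} (hj : m ≤ j) : coeff (Finsupp.single j 1) u = 0 := by
  obtain ⟨c, -, rfl⟩ := Finset.mem_image.mp hu
  simp only [coeff_sum, coeff_C_mul, coeff_X, Finsupp.single_left_inj one_ne_zero]
  refine Finset.sum_eq_zero fun i hi => ?_
  rw [if_neg (by rintro rfl; simp at hi; omega), mul_zero]

theorem V_succ {m : ℕ} (hm : m < n) :
    V p n (m + 1) = (Finset.univ ×ˢ V p n m).image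
      fun au : ZMod p × MvPolynomial (Fin n) (ZMod p) => au.2 + au.1 • X ⟨m, hm⟩ := by
  have hfilter : Finset.univ.filter (fun j : Fin n => j.val < m + 1)
      = insert ⟨m, hm⟩ (Finset.univ.filter fun j : Fin n => j.val < m) := by
    ext j
    simp only [Finset.mem_filter, Finset.mem_insert, Finset.mem_univ, true_and, Fin.ext_iff]
    omega
  have hnotmem : (⟨m, hm⟩ : Fin n) ∉ Finset.univ.filter fun j : Fin n => j.val < m := by simp
  ext x
  simp only [V, Finset.mem_image, Finset.mem_product, Finset.mem_univ, true_and, hfilter,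
    Finset.sum_insert hnotmem, smul_eq_C_mul]
  constructor
  · rintro ⟨c, rfl⟩
    exact ⟨(c ⟨m, hm⟩, _), ⟨c, rfl⟩, add_comm _ _⟩
  · rintro ⟨⟨a, u⟩, ⟨c, rfl⟩, rfl⟩
    refine ⟨Function.update c ⟨m, hm⟩ a, ?_⟩
    rw [Function.update_self, add_comm]
    congr 1
    refine Finset.sum_congr rfl fun j hj => ?_
    rw [Function.update_of_ne]
    rintro rfl
    simp at hj

theorem injOn_add_smul_X_of_mem_V {m : ℕ} (hm : m < n) :
    Set.InjOn (fun au : ZMod p × MvPolynomial (Fin n) (ZMod p) => au.2 + au.1 • X ⟨m, hm⟩)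
      ((Finset.univ ×ˢ V p n m : Finset (ZMod p × _)) : Set _) := by
  have hcoeff {a : ZMod p} {u : MvPolynomial (Fin n) (ZMod p)} (hu : u ∈ V p n m) :
      coeff (Finsupp.single ⟨m, hm⟩ 1) (u + a • X ⟨m, hm⟩) = a := by
    simp [coeff_single_eq_zero_of_mem_V hu (j := ⟨m, hm⟩) le_rfl, coeff_X]
  rintro ⟨a, u⟩ hu ⟨b, v⟩ hv h
  simp only [Finset.coe_product, Set.mem_prod, Finset.mem_coe] at hu hv
  have hab := congrArg (coeff (Finsupp.single ⟨m, hm⟩ 1)) h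
  simp only [hcoeff hu.2, hcoeff hv.2] at hab
  subst hab
  simpa using h

theorem f_succ_eq_prod_comp {m : ℕ} (hm : m < n) :
    f p n (m + 1) = ∏ a : ZMod p,
      (f p n m).comp (Polynomial.X - Polynomial.C (a • X ⟨m, hm⟩)) := by
  rw [f, V_succ hm, Finset.prod_image (injOn_add_smul_X_of_mem_V hm), Finset.prod_product]
  refine Finset.prod_congr rfl fun a _ => ?_
  rw [f, Polynomial.prod_comp]
  refine Finset.prod_congr rfl fun u _ => ?_
  simp only [Polynomial.sub_comp, Polynomial.X_comp, Polynomial.C_comp, map_add]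
  ring

theorem f_succ_of_isAdditive {m : ℕ} (hm : m < n) (hf : (f p n m).IsAdditive) :
    f p n (m + 1) = f p n m ^ p - Polynomial.C (hGen p n ⟨m, hm⟩) * f p n m := by
  rw [f_succ_eq_prod_comp hm, hf.prod_comp_X_sub_C_smul, hGen]

theorem isAdditive_f {m : ℕ} (hm : m ≤ n) : (f p n m).IsAdditive := by
  induction m with
  | zero => rw [f_zero]; exact Polynomial.isAdditive_X
  | succ m ih =>
    have hf := ih (Nat.le_of_succ_le hm)
    rw [f_succ_of_isAdditive hm hf]
    exact hf.pow_char_sub_C_mul p _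

/-- the factorization `f_k = f_{k-1}^p - C(h_k) · f_{k-1}`. -/
theorem stmt2 (p n : ℕ) [Fact p.Prime] (k : ℕ) (hk1 : 1 ≤ k) (hk2 : k ≤ n) :
    f p n k = (f p n (k - 1)) ^ p
      - Polynomial.C (hGen p n ⟨k - 1, by omega⟩) * f p n (k - 1) := by
  obtain ⟨m, rfl⟩ := Nat.exists_eq_add_of_le' hk1
  exact f_succ_of_isAdditive hk2 (isAdditive_f (Nat.le_of_succ_le hk2))
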